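/- Let m > 2 be an integer, k a positive multiple of m, and P a finite set of points in ℝ² with pairwise distinct x-coordinates and pairwise distinct y-coordinates. Let ξ₀ < ξ₁ < … < ξ_m and η₀ < η₁ < … < η_m be reals, define the vertical strips X_i = {p : ξ_i ≤ p_x < ξ_{i+1}}, horizontal strips Y_j = {p : η_j ≤ p_y < η_{j+1}}, and cells C_{ij} = X_i ∩ Y_j. Let OPT ⊆ P with |OPT| = k minimize w over all k-element subsets of P, suppose OPT ⊆ ∪_{i,j} C_{ij} and |OPT ∩ X_i| = |OPT ∩ Y_j| = k/m for all 0 ≤ i, j < m, and set k_{ij} = |OPT ∩ C_{ij}| and ∇_{ij} = ((2i+1−m)k/m, (2j+1−m)k/m). For each i,j let A_{ij} ⊆ P ∩ C_{ij} with |A_{ij}| = k_{ij} minimize Σ_{p∈A_{ij}} ⟨p, ∇_{ij}⟩ over all k_{ij}-element subsets of P ∩ C_{ij}, and put A = ∪_{i,j} A_{ij}, A_{i·} = ∪_j A_{ij}, A_{·j} = ∪_i A_{ij}. Then (1/2)·Σ_{i,j} [ w_x(A_{ij}, A∖A_{i·}) + w_y(A_{ij}, A∖A_{·j}) ] ≤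 w(OPT); i.e., the total cross-strip distance of the greedily chosen set A is at most the weight of the optimal set. -/

import Mathlib

/-!
Between two distinct vertical strips the sign of `p_x - q_x` is fixed by the strip indices, so for
cells whose vertical strips each hold `K` points the x-cross-strip distance is linear:
`∑_{i ≠ i'} ∑_{p ∈ X_i, q ∈ X_i'} |p_x - q_x| = 2K ∑_i (2i+1-m) ∑_{p ∈ X_i} p_x`, because strip `i`
lies to the right of `i` strips and to the left of `m-1-i`. The same holds for y. Since `A` and
the cells of OPT have the same cell counts, the cross-strip weight of each equals its pairing
`∑_{ij} ∑_{p ∈ C_ij} ⟨p, ∇_ij⟩` with the cell gradients; the greedy choice makes this pairing for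
`A` at most that for OPT, and the cross-strip weight of OPT is at most `w(OPT)` since it only
counts some of the pairs of OPT.
-/

open Finset
open scoped Classical

/-- The L1 (Manhattan) distance between two points of the plane. -/
noncomputable def dist1 (p q : Fin 2 → ℝ) : ℝ := ∑ i, |p i - q i|

/-- The sum of L1 distances over all unordered pairs of distinct points of `S`. -/
noncomputable def w (S : Finset (Fin 2 → ℝ)) : ℝ := (∑ p ∈ S, ∑ q ∈ S, dist1 p q) / 2

/-- `w_x(S,T) = Σ_{p∈S, q∈T} |p_x − q_x|` (sum over ordered pairs). -/
noncomputable def wxp (S T : Finset (Fin 2 → ℝ)) : ℝ := ∑ p ∈ S, ∑ q ∈ T, |p 0 - q 0|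

/-- `w_y(S,T) = Σ_{p∈S, q∈T} |p_y − q_y|` (sum over ordered pairs). -/
noncomputable def wyp (S T : Finset (Fin 2 → ℝ)) : ℝ := ∑ p ∈ S, ∑ q ∈ T, |p 1 - q 1|

theorem sum_range_sign_sub (m j : ℕ) (hj : j < m) :
    ∑ i ∈ range m, (SignType.sign ((j : ℝ) - i) : ℝ) = 2 * j + 1 - m := by
  induction m, hj using Nat.le_induction with
  | base =>
    rw [sum_range_succ, sub_self, sign_zero, SignType.coe_zero, add_zero,
      sum_congr rfl fun i hi => by rw [sign_pos (by simpa using mem_range.1 hi), SignType.coe_one]]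
    simp only [sum_const, card_range, nsmul_eq_mul, mul_one]
    push_cast
    ring
  | succ n hjn ih =>
    rw [sum_range_succ, ih, sign_neg (by simpa using hjn), SignType.coe_neg, SignType.coe_one]
    push_cast
    ring

theorem sum_sum_sign_mul_sub (m : ℕ) (x : ℕ → ℝ) :
    ∑ i ∈ range m, ∑ j ∈ range m, (SignType.sign ((j : ℝ) - i) : ℝ) * (x j - x i) =
      2 * ∑ j ∈ range m, (2 * j + 1 - m) * x j := by
  have hswap : ∑ i ∈ range m, ∑ j ∈ range m, (SignType.sign ((j : ℝ) - i) : ℝ) * x i =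
      -∑ i ∈ range m, ∑ j ∈ range m, (SignType.sign ((j : ℝ) - i) : ℝ) * x j := by
    rw [sum_comm, ← sum_neg_distrib]
    refine sum_congr rfl fun i _ => ?_
    rw [← sum_neg_distrib]
    refine sum_congr rfl fun j _ => ?_
    rw [← neg_sub, Left.sign_neg, SignType.coe_neg]
    ring
  simp only [mul_sub, sum_sub_distrib, hswap, sub_neg_eq_add, ← two_mul]
  rw [sum_comm]
  congr 1
  refine sum_congr rfl fun j hj => ?_
  rw [← sum_mul, sum_range_sign_sub m j (mem_range.1 hj)]

section Strips

variable {m : ℕ} {ξ : ℕ → ℝ} {α : Type*}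

theorem lt_of_mem_strips (hξ : ∀ i < m, ξ i < ξ (i + 1)) {i j : ℕ} (hij : i < j) (hj : j < m)
    {x y : ℝ} (hx : x ∈ Set.Ico (ξ i) (ξ (i + 1))) (hy : y ∈ Set.Ico (ξ j) (ξ (j + 1))) :
    x < y := by
  have hmono := (strictMonoOn_Iic_of_lt_succ (n := m) fun i hi => by simpa using hξ i hi).monotoneOn
  exact hx.2.trans_le ((hmono (Set.mem_Iic.2 (by omega)) (Set.mem_Iic.2 hj.le) hij).trans hy.1)

theorem eq_of_mem_strips (hξ : ∀ i < m, ξ i < ξ (i + 1)) {i j : ℕ} (hi : i < m) (hj : j < m)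
    {x : ℝ} (hxi : x ∈ Set.Ico (ξ i) (ξ (i + 1))) (hxj : x ∈ Set.Ico (ξ j) (ξ (j + 1))) :
    i = j := by
  rcases lt_trichotomy i j with h | h | h
  · exact absurd (lt_of_mem_strips hξ h hj hxi hxj) (lt_irrefl x)
  · exact h
  · exact absurd (lt_of_mem_strips hξ h hi hxj hxi) (lt_irrefl x)

theorem abs_sub_eq_sign_mul_of_mem_strips (hξ : ∀ i < m, ξ i < ξ (i + 1)) {i j : ℕ}
    (hi : i < m) (hj : j < m) (hij : i ≠ j) {x y : ℝ} (hx : x ∈ Set.Ico (ξ i) (ξ (i + 1)))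
    (hy : y ∈ Set.Ico (ξ j) (ξ (j + 1))) :
    |y - x| = SignType.sign ((j : ℝ) - i) * (y - x) := by
  rw [← sign_mul_self]
  congr 2
  rcases hij.lt_or_gt with h | h
  · rw [sign_pos (sub_pos.2 (lt_of_mem_strips hξ h hj hx hy)), sign_pos (by simpa using h)]
  · rw [sign_neg (sub_neg.2 (lt_of_mem_strips hξ h hi hy hx)), sign_neg (by simpa using h)]

theorem pairwiseDisjoint_of_mem_strips (hξ : ∀ i < m, ξ i < ξ (i + 1)) (c : α → ℝ)
    (R : ℕ → Finset α) (hR : ∀ i < m, ∀ p ∈ R i, c p ∈ Set.Ico (ξ i) (ξ (i + 1))) :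
    (range m : Set ℕ).PairwiseDisjoint R := by
  intro i hi j hj hij
  simp only [coe_range, Set.mem_Iio] at hi hj
  exact disjoint_left.2 fun p hpi hpj =>
    hij (eq_of_mem_strips hξ hi hj (hR i hi p hpi) (hR j hj p hpj))

theorem card_eq_sum_card_filter_strips (hξ : ∀ i < m, ξ i < ξ (i + 1))
    (S : Finset α) (c : α → ℝ) (hS : ∀ p ∈ S, c p ∈ Set.Ico (ξ 0) (ξ m)) :
    S.card = ∑ i ∈ range m, (S.filter fun p => ξ i ≤ c p ∧ c p < ξ (i + 1)).card := by
  rw [← card_biUnion (pairwiseDisjoint_of_mem_strips hξ c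
    (fun i => S.filter fun p => ξ i ≤ c p ∧ c p < ξ (i + 1)) fun i _ p hp => (mem_filter.1 hp).2)]
  congr 1
  ext p
  simp only [mem_biUnion, mem_range, mem_filter]
  refine ⟨fun hp => ?_, fun ⟨_, _, hp, _⟩ => hp⟩
  obtain ⟨i, hi, hpi⟩ := Set.mem_iUnion₂.1 (Ico_subset_biUnion_Ico m ξ (hS p hp))
  exact ⟨i, mem_range.1 hi, hp, hpi⟩

theorem card_filter_eq_sum_card_filter_and_strips (hξ : ∀ i < m, ξ i < ξ (i + 1))
    (S : Finset α) (P : α → Prop) [DecidablePred P] (c : α → ℝ)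
    (hS : ∀ p ∈ S, P p → c p ∈ Set.Ico (ξ 0) (ξ m)) :
    (S.filter P).card =
      ∑ i ∈ range m, (S.filter fun p => P p ∧ (ξ i ≤ c p ∧ c p < ξ (i + 1))).card := by
  rw [card_eq_sum_card_filter_strips hξ _ c fun p hp =>
    hS p (mem_filter.1 hp).1 (mem_filter.1 hp).2]
  simp only [filter_filter]

theorem biUnion_sdiff_eq_biUnion_erase [DecidableEq α] {s : Finset ℕ} {R : ℕ → Finset α}
    (hdisj : (s : Set ℕ).PairwiseDisjoint R) {i : ℕ} (hi : i ∈ s) :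
    s.biUnion R \ R i = (s.erase i).biUnion R := by
  ext q
  simp only [mem_sdiff, mem_biUnion, mem_erase]
  constructor
  · rintro ⟨⟨j, hj, hq⟩, hqi⟩
    exact ⟨j, ⟨fun h => hqi (h ▸ hq), hj⟩, hq⟩
  · rintro ⟨j, ⟨hji, hj⟩, hq⟩
    exact ⟨⟨j, hj, hq⟩, disjoint_left.1 (hdisj (mem_coe.2 hj) (mem_coe.2 hi) hji) hq⟩

theorem sum_sum_abs_sub_eq_sign_mul_of_mem_strips (hξ : ∀ i < m, ξ i < ξ (i + 1))
    (c : α → ℝ) (R : ℕ → Finset α) {K : ℝ}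
    (hR : ∀ i < m, ∀ p ∈ R i, c p ∈ Set.Ico (ξ i) (ξ (i + 1)))
    (hcard : ∀ i < m, ((R i).card : ℝ) = K) {i j : ℕ} (hi : i < m) (hj : j < m) (hij : i ≠ j) :
    ∑ p ∈ R i, ∑ q ∈ R j, |c p - c q| =
      SignType.sign ((j : ℝ) - i) * K * ((∑ q ∈ R j, c q) - ∑ p ∈ R i, c p) :=
  calc ∑ p ∈ R i, ∑ q ∈ R j, |c p - c q|
      = ∑ p ∈ R i, ∑ q ∈ R j, SignType.sign ((j : ℝ) - i) * (c q - c p) :=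
        sum_congr rfl fun p hp => sum_congr rfl fun q hq => by
          rw [abs_sub_comm, abs_sub_eq_sign_mul_of_mem_strips hξ hi hj hij
            (hR i hi p hp) (hR j hj q hq)]
    _ = SignType.sign ((j : ℝ) - i) * ((R i).card * ∑ q ∈ R j, c q -
          (R j).card * ∑ p ∈ R i, c p) := by
        simp only [← mul_sum, sum_sub_distrib, sum_const, nsmul_eq_mul]
    _ = _ := by rw [hcard i hi, hcard j hj]; ring

theorem sum_sum_sdiff_abs_sub_eq_of_mem_strips [DecidableEq α] (hξ : ∀ i < m, ξ i < ξ (i + 1))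
    (c : α → ℝ) (R : ℕ → Finset α) {K : ℝ}
    (hR : ∀ i < m, ∀ p ∈ R i, c p ∈ Set.Ico (ξ i) (ξ (i + 1)))
    (hcard : ∀ i < m, ((R i).card : ℝ) = K) :
    ∑ i ∈ range m, ∑ p ∈ R i, ∑ q ∈ (range m).biUnion R \ R i, |c p - c q| =
      2 * ∑ i ∈ range m, (2 * i + 1 - m) * K * ∑ p ∈ R i, c p := by
  have hdisj := pairwiseDisjoint_of_mem_strips hξ c R hR
  calc ∑ i ∈ range m, ∑ p ∈ R i, ∑ q ∈ (range m).biUnion R \ R i, |c p - c q|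
      = ∑ i ∈ range m, ∑ j ∈ (range m).erase i, ∑ p ∈ R i, ∑ q ∈ R j, |c p - c q| := by
        refine sum_congr rfl fun i hi => ?_
        rw [biUnion_sdiff_eq_biUnion_erase hdisj hi]
        exact (sum_congr rfl fun p _ =>
          sum_biUnion (hdisj.subset (coe_subset.2 (erase_subset _ _)))).trans sum_comm
    _ = ∑ i ∈ range m, ∑ j ∈ range m,
          SignType.sign ((j : ℝ) - i) * K * ((∑ q ∈ R j, c q) - ∑ p ∈ R i, c p) := by
        refine sum_congr rfl fun i hi => ?_
        rw [sum_congr rfl fun j hj => sum_sum_abs_sub_eq_sign_mul_of_mem_strips hξ c R hR hcard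
          (mem_range.1 hi) (mem_range.1 (mem_of_mem_erase hj)) (ne_of_mem_erase hj).symm,
          sum_erase]
        simp
    _ = K * (2 * ∑ i ∈ range m, (2 * i + 1 - m) * ∑ p ∈ R i, c p) := by
        rw [← sum_sum_sign_mul_sub m fun i => ∑ p ∈ R i, c p, mul_sum]
        exact sum_congr rfl fun i _ => by rw [mul_sum]; exact sum_congr rfl fun j _ => by ring
    _ = _ := by rw [mul_sum, mul_sum, mul_sum]; exact sum_congr rfl fun i _ => by ring

theorem sum_cells_sum_sdiff_abs_sub_eq_of_mem_strips [DecidableEq α]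
    (hξ : ∀ i < m, ξ i < ξ (i + 1)) (c : α → ℝ) (B : ℕ → ℕ → Finset α) {K : ℝ}
    (hB : ∀ i < m, ∀ j < m, ∀ p ∈ B i j, c p ∈ Set.Ico (ξ i) (ξ (i + 1)))
    (hrow : ∀ i < m, (range m : Set ℕ).PairwiseDisjoint (B i))
    (hcard : ∀ i < m, ∑ j ∈ range m, ((B i j).card : ℝ) = K) :
    ∑ i ∈ range m, ∑ j ∈ range m, ∑ p ∈ B i j,
        ∑ q ∈ ((range m).biUnion fun i' => (range m).biUnion fun j' => B i' j') \
          ((range m).biUnion fun j' => B i j'), |c p - c q| =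
      2 * ∑ i ∈ range m, ∑ j ∈ range m, ∑ p ∈ B i j, (2 * i + 1 - m) * K * c p := by
  have key := sum_sum_sdiff_abs_sub_eq_of_mem_strips (K := K) hξ c
    (fun i => (range m).biUnion (B i))
    (fun i hi p hp => by
      obtain ⟨j, hj, hp⟩ := mem_biUnion.1 hp
      exact hB i hi j (mem_range.1 hj) p hp)
    (fun i hi => by rw [card_biUnion (hrow i hi), Nat.cast_sum, hcard i hi])
  calc _ = ∑ i ∈ range m, ∑ p ∈ (range m).biUnion (B i),
        ∑ q ∈ (range m).biUnion (fun i => (range m).biUnion (B i)) \ (range m).biUnion (B i),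
          |c p - c q| :=
        sum_congr rfl fun i hi => (sum_biUnion (hrow i (mem_range.1 hi))).symm
    _ = _ := by
        rw [key]
        congr 1
        exact sum_congr rfl fun i hi => by rw [mul_sum, sum_biUnion (hrow i (mem_range.1 hi))]

end Strips

section Grid

variable {m : ℕ} {ξ η : ℕ → ℝ}

noncomputable def crossStripWeight (m : ℕ) (B : ℕ → ℕ → Finset (Fin 2 → ℝ)) : ℝ :=
  (1 / 2) * ∑ i ∈ range m, ∑ j ∈ range m,
    (wxp (B i j) (((range m).biUnion fun i' => (range m).biUnion fun j' => B i' j') \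
        ((range m).biUnion fun j' => B i j')) +
     wyp (B i j) (((range m).biUnion fun i' => (range m).biUnion fun j' => B i' j') \
        ((range m).biUnion fun i' => B i' j)))

/-- `∑_{i,j} ∑_{p ∈ B i j} ⟨p, ∇_{ij}⟩` with `∇_{ij} = K • (2i+1-m, 2j+1-m)`. -/
noncomputable def gradientSum (m : ℕ) (K : ℝ) (B : ℕ → ℕ → Finset (Fin 2 → ℝ)) : ℝ :=
  ∑ i ∈ range m, ∑ j ∈ range m, ∑ p ∈ B i j,
    ((2 * i + 1 - m) * K * p 0 + (2 * j + 1 - m) * K * p 1)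

theorem w_eq_half_wxp_add_wyp (S : Finset (Fin 2 → ℝ)) : w S = 1 / 2 * (wxp S S + wyp S S) := by
  simp only [w, wxp, wyp, dist1, Fin.sum_univ_two, ← sum_add_distrib]
  ring

theorem crossStripWeight_eq_gradientSum (hξ : ∀ i < m, ξ i < ξ (i + 1))
    (hη : ∀ j < m, η j < η (j + 1)) {B : ℕ → ℕ → Finset (Fin 2 → ℝ)} {K : ℝ}
    (hB : ∀ i < m, ∀ j < m, ∀ p ∈ B i j,
      p 0 ∈ Set.Ico (ξ i) (ξ (i + 1)) ∧ p 1 ∈ Set.Ico (η j) (η (j + 1)))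
    (hrow : ∀ i < m, ∑ j ∈ range m, ((B i j).card : ℝ) = K)
    (hcol : ∀ j < m, ∑ i ∈ range m, ((B i j).card : ℝ) = K) :
    crossStripWeight m B = gradientSum m K B := by
  have hx := sum_cells_sum_sdiff_abs_sub_eq_of_mem_strips hξ (fun p => p 0) B
    (fun i hi j hj p hp => (hB i hi j hj p hp).1)
    (fun i hi => pairwiseDisjoint_of_mem_strips hη (fun p => p 1) (B i)
      fun j hj p hp => (hB i hi j hj p hp).2) hrow
  have hy := sum_cells_sum_sdiff_abs_sub_eq_of_mem_strips hη (fun p => p 1) (fun j i => B i j)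
    (fun j hj i hi p hp => (hB i hi j hj p hp).2)
    (fun j hj => pairwiseDisjoint_of_mem_strips hξ (fun p => p 0) (fun i => B i j)
      fun i hi p hp => (hB i hi j hj p hp).1) hcol
  have hU : ((range m).biUnion fun j' => (range m).biUnion fun i' => B i' j') =
      (range m).biUnion fun i' => (range m).biUnion fun j' => B i' j' := by
    ext p
    simp only [mem_biUnion]
    exact ⟨fun ⟨j, hj, i, hi, h⟩ => ⟨i, hi, j, hj, h⟩, fun ⟨i, hi, j, hj, h⟩ => ⟨j, hj, i, hi, h⟩⟩
  rw [hU, sum_comm] at hy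
  rw [sum_comm (s := range m) (t := range m) (f := fun j i => ∑ p ∈ B i j, _)] at hy
  simp only [crossStripWeight, gradientSum, wxp, wyp, sum_add_distrib]
  rw [hx, hy]
  ring

theorem crossStripWeight_le_w (hξ : ∀ i < m, ξ i < ξ (i + 1))
    (hη : ∀ j < m, η j < η (j + 1)) {B : ℕ → ℕ → Finset (Fin 2 → ℝ)}
    (hB : ∀ i < m, ∀ j < m, ∀ p ∈ B i j,
      p 0 ∈ Set.Ico (ξ i) (ξ (i + 1)) ∧ p 1 ∈ Set.Ico (η j) (η (j + 1)))
    {S : Finset (Fin 2 → ℝ)} (hBS : ∀ i < m, ∀ j < m, B i j ⊆ S) :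
    crossStripWeight m B ≤ w S := by
  set U := (range m).biUnion fun i' => (range m).biUnion fun j' => B i' j'
  have hUS : U ⊆ S := biUnion_subset.2 fun i hi =>
    biUnion_subset.2 fun j hj => hBS i (mem_range.1 hi) j (mem_range.1 hj)
  have hcells : ∀ g : (Fin 2 → ℝ) → ℝ,
      ∑ i ∈ range m, ∑ j ∈ range m, ∑ p ∈ B i j, g p = ∑ p ∈ U, g p := by
    intro g
    rw [sum_biUnion (pairwiseDisjoint_of_mem_strips hξ (fun p => p 0) _ fun i hi p hp => by
      obtain ⟨j, hj, hp⟩ := mem_biUnion.1 hp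
      exact (hB i hi j (mem_range.1 hj) p hp).1)]
    exact sum_congr rfl fun i hi => (sum_biUnion (pairwiseDisjoint_of_mem_strips hη (fun p => p 1)
      (B i) fun j hj p hp => (hB i (mem_range.1 hi) j hj p hp).2)).symm
  rw [w_eq_half_wxp_add_wyp, crossStripWeight]
  gcongr 1 / 2 * ?_
  calc _ ≤ ∑ i ∈ range m, ∑ j ∈ range m, ∑ p ∈ B i j,
          (∑ q ∈ S, |p 0 - q 0| + ∑ q ∈ S, |p 1 - q 1|) := by
        refine sum_le_sum fun i _ => sum_le_sum fun j _ => ?_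
        rw [wxp, wyp, ← sum_add_distrib]
        gcongr <;> exact sdiff_subset.trans hUS
    _ = ∑ p ∈ U, (∑ q ∈ S, |p 0 - q 0| + ∑ q ∈ S, |p 1 - q 1|) := hcells _
    _ ≤ ∑ p ∈ S, (∑ q ∈ S, |p 0 - q 0| + ∑ q ∈ S, |p 1 - q 1|) :=
        sum_le_sum_of_subset_of_nonneg hUS fun _ _ _ => by positivity
    _ = wxp S S + wyp S S := sum_add_distrib

end Grid

theorem ptas_cross_strip_bound_general
    (m k : ℕ) (hmk : m ∣ k)
    (P : Finset (Fin 2 → ℝ))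
    (ξ η : ℕ → ℝ)
    (hξ : ∀ i < m, ξ i < ξ (i + 1))
    (hη : ∀ j < m, η j < η (j + 1))
    (OPT : Finset (Fin 2 → ℝ)) (hOP : OPT ⊆ P)
    -- OPT is covered by the cells `C_{ij} = X_i ∩ Y_j`
    (hOcover : ∀ p ∈ OPT, ξ 0 ≤ p 0 ∧ p 0 < ξ m ∧ η 0 ≤ p 1 ∧ p 1 < η m)
    -- each vertical strip `X_i` and each horizontal strip `Y_j` contains exactly
    -- `k/m` points of OPT
    (hOX : ∀ i < m,
      (OPT.filter fun p => ξ i ≤ p 0 ∧ p 0 < ξ (i + 1)).card = k / m)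
    (hOY : ∀ j < m,
      (OPT.filter fun p => η j ≤ p 1 ∧ p 1 < η (j + 1)).card = k / m)
    (A : ℕ → ℕ → Finset (Fin 2 → ℝ))
    -- `A_{ij} ⊆ P ∩ C_{ij}` with `|A_{ij}| = k_{ij} = |OPT ∩ C_{ij}|` minimizes
    -- `Σ_{p ∈ A_{ij}} ⟨p, ∇_{ij}⟩` where `∇_{ij} = ((2i+1−m)k/m, (2j+1−m)k/m)`
    (hAsub : ∀ i < m, ∀ j < m,
      A i j ⊆ P.filter fun p =>
        (ξ i ≤ p 0 ∧ p 0 < ξ (i + 1)) ∧ (η j ≤ p 1 ∧ p 1 < η (j + 1)))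
    (hAcard : ∀ i < m, ∀ j < m,
      (A i j).card = (OPT.filter fun p =>
        (ξ i ≤ p 0 ∧ p 0 < ξ (i + 1)) ∧ (η j ≤ p 1 ∧ p 1 < η (j + 1))).card)
    (hAmin : ∀ i < m, ∀ j < m,
      ∀ B ⊆ (P.filter fun p =>
        (ξ i ≤ p 0 ∧ p 0 < ξ (i + 1)) ∧ (η j ≤ p 1 ∧ p 1 < η (j + 1))),
        B.card = (A i j).card →
        ∑ p ∈ A i j,
          (((2 * (i : ℝ) + 1 - m) * k / m) * p 0 +
           ((2 * (j : ℝ) + 1 - m) * k / m) * p 1) ≤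
        ∑ p ∈ B,
          (((2 * (i : ℝ) + 1 - m) * k / m) * p 0 +
           ((2 * (j : ℝ) + 1 - m) * k / m) * p 1)) :
    (1 / 2) * ∑ i ∈ Finset.range m, ∑ j ∈ Finset.range m,
      (wxp (A i j)
        (((Finset.range m).biUnion fun i' =>
            (Finset.range m).biUnion fun j' => A i' j') \
          ((Finset.range m).biUnion fun j' => A i j')) +
       wyp (A i j)
        (((Finset.range m).biUnion fun i' =>
            (Finset.range m).biUnion fun j' => A i' j') \
          ((Finset.range m).biUnion fun i' => A i' j))) ≤ w OPT := by
  set O : ℕ → ℕ → Finset (Fin 2 → ℝ) := fun i j => OPT.filter fun p =>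
    (ξ i ≤ p 0 ∧ p 0 < ξ (i + 1)) ∧ (η j ≤ p 1 ∧ p 1 < η (j + 1))
  have hOcells : ∀ i < m, ∀ j < m, ∀ p ∈ O i j,
      p 0 ∈ Set.Ico (ξ i) (ξ (i + 1)) ∧ p 1 ∈ Set.Ico (η j) (η (j + 1)) :=
    fun i _ j _ p hp => (mem_filter.1 hp).2
  have hAcells : ∀ i < m, ∀ j < m, ∀ p ∈ A i j,
      p 0 ∈ Set.Ico (ξ i) (ξ (i + 1)) ∧ p 1 ∈ Set.Ico (η j) (η (j + 1)) :=
    fun i hi j hj p hp => (mem_filter.1 (hAsub i hi j hj hp)).2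
  have hOrow : ∀ i < m, ∑ j ∈ range m, ((O i j).card : ℝ) = k / m := fun i hi => by
    rw [← Nat.cast_div_charZero hmk, ← hOX i hi, card_filter_eq_sum_card_filter_and_strips hη
      _ _ (fun p => p 1) fun p hp _ => ⟨(hOcover p hp).2.2.1, (hOcover p hp).2.2.2⟩, Nat.cast_sum]
  have hOcol : ∀ j < m, ∑ i ∈ range m, ((O i j).card : ℝ) = k / m := fun j hj => by
    rw [← Nat.cast_div_charZero hmk, ← hOY j hj, card_filter_eq_sum_card_filter_and_strips hξ
      _ _ (fun p => p 0) fun p hp _ => ⟨(hOcover p hp).1, (hOcover p hp).2.1⟩, Nat.cast_sum]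
    exact sum_congr rfl fun i _ => by simp only [O, and_comm]
  have hArow : ∀ i < m, ∑ j ∈ range m, ((A i j).card : ℝ) = k / m := fun i hi => by
    rw [← hOrow i hi]
    exact sum_congr rfl fun j hj => by rw [hAcard i hi j (mem_range.1 hj)]
  have hAcol : ∀ j < m, ∑ i ∈ range m, ((A i j).card : ℝ) = k / m := fun j hj => by
    rw [← hOcol j hj]
    exact sum_congr rfl fun i hi => by rw [hAcard i (mem_range.1 hi) j hj]
  calc _ = gradientSum m (k / m) A := crossStripWeight_eq_gradientSum hξ hη hAcells hArow hAcol
    _ ≤ gradientSum m (k / m) O := sum_le_sum fun i hi => sum_le_sum fun j hj => by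
          simpa only [mul_div_assoc] using hAmin i (mem_range.1 hi) j (mem_range.1 hj) (O i j)
            (filter_subset_filter _ hOP) (hAcard i (mem_range.1 hi) j (mem_range.1 hj)).symm
    _ = crossStripWeight m O := (crossStripWeight_eq_gradientSum hξ hη hOcells hOrow hOcol).symm
    _ ≤ w OPT := crossStripWeight_le_w hξ hη hOcells fun i _ j _ => filter_subset _ _

/-- The cross-strip distance bound for the PTAS selection rule: the total cross-strip
distance of the greedily chosen set `A = ∪_{i,j} A_{ij}` is at most `w(OPT)`. -/
theorem ptas_cross_strip_bound
    (m k : ℕ) (hm : 2 < m) (hk : 0 < k) (hmk : m ∣ k)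
    (P : Finset (Fin 2 → ℝ))
    (hPx : ∀ p ∈ P, ∀ q ∈ P, p ≠ q → p 0 ≠ q 0)
    (hPy : ∀ p ∈ P, ∀ q ∈ P, p ≠ q → p 1 ≠ q 1)
    (ξ η : ℕ → ℝ)
    (hξ : ∀ i < m, ξ i < ξ (i + 1))
    (hη : ∀ j < m, η j < η (j + 1))
    (OPT : Finset (Fin 2 → ℝ)) (hOP : OPT ⊆ P) (hOcard : OPT.card = k)
    (hOopt : ∀ T ⊆ P, T.card = k → w OPT ≤ w T)
    -- OPT is covered by the cells `C_{ij} = X_i ∩ Y_j`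
    (hOcover : ∀ p ∈ OPT, ξ 0 ≤ p 0 ∧ p 0 < ξ m ∧ η 0 ≤ p 1 ∧ p 1 < η m)
    -- each vertical strip `X_i` and each horizontal strip `Y_j` contains exactly
    -- `k/m` points of OPT
    (hOX : ∀ i < m,
      (OPT.filter fun p => ξ i ≤ p 0 ∧ p 0 < ξ (i + 1)).card = k / m)
    (hOY : ∀ j < m,
      (OPT.filter fun p => η j ≤ p 1 ∧ p 1 < η (j + 1)).card = k / m)
    (A : ℕ → ℕ → Finset (Fin 2 → ℝ))
    -- `A_{ij} ⊆ P ∩ C_{ij}` with `|A_{ij}| = k_{ij} = |OPT ∩ C_{ij}|` minimizes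
    -- `Σ_{p ∈ A_{ij}} ⟨p, ∇_{ij}⟩` where `∇_{ij} = ((2i+1−m)k/m, (2j+1−m)k/m)`
    (hAsub : ∀ i < m, ∀ j < m,
      A i j ⊆ P.filter fun p =>
        (ξ i ≤ p 0 ∧ p 0 < ξ (i + 1)) ∧ (η j ≤ p 1 ∧ p 1 < η (j + 1)))
    (hAcard : ∀ i < m, ∀ j < m,
      (A i j).card = (OPT.filter fun p =>
        (ξ i ≤ p 0 ∧ p 0 < ξ (i + 1)) ∧ (η j ≤ p 1 ∧ p 1 < η (j + 1))).card)
    (hAmin : ∀ i < m, ∀ j < m,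
      ∀ B ⊆ (P.filter fun p =>
        (ξ i ≤ p 0 ∧ p 0 < ξ (i + 1)) ∧ (η j ≤ p 1 ∧ p 1 < η (j + 1))),
        B.card = (A i j).card →
        ∑ p ∈ A i j,
          (((2 * (i : ℝ) + 1 - m) * k / m) * p 0 +
           ((2 * (j : ℝ) + 1 - m) * k / m) * p 1) ≤
        ∑ p ∈ B,
          (((2 * (i : ℝ) + 1 - m) * k / m) * p 0 +
           ((2 * (j : ℝ) + 1 - m) * k / m) * p 1)) :
    (1 / 2) * ∑ i ∈ Finset.range m, ∑ j ∈ Finset.range m,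
      (wxp (A i j)
        (((Finset.range m).biUnion fun i' =>
            (Finset.range m).biUnion fun j' => A i' j') \
          ((Finset.range m).biUnion fun j' => A i j')) +
       wyp (A i j)
        (((Finset.range m).biUnion fun i' =>
            (Finset.range m).biUnion fun j' => A i' j') \
          ((Finset.range m).biUnion fun i' => A i' j))) ≤ w OPT :=
  ptas_cross_strip_bound_general m k hmk P ξ η hξ hη OPT hOP hOcover hOX hOY A hAsub hAcard hAmin
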